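/- arXiv:1809.06437 — 4 statements merged into one kernel-verified Lean document; each statement's English description precedes it below -/
import Mathlib

section
/- Suppose the inter-layer weights vanish off the node diagonal, i.e. w_{ℓ,ℓ'}(v,x) = 0 whenever ℓ ≠ ℓ' and x ≠ v, and suppose d(t,v) = 1 (the previous node t is at distance one from the current node v). Then for every node x ∈ V, the multilayer unnormalized transition weight satisfies π*(t,v,x) = β_{pq}(t,x) · Ã_{v,x}(r); that is, the unnormalized transition weights of the multi-node2vec random walk on the multilayer network coincide with the unnormalized transition weights of the node2vec second-order random walk on the adjusted aggregate graph with adjacency matrix Ã(r). -/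
/-- Multi-node2vec transition weights coincide with node2vec weights on the
adjusted aggregate graph `Ã(r)` when inter-layer weights vanish off the node
diagonal and `d(t,v) = 1`. -/
theorem stmt_0 {V L : Type*} [Fintype V] [Fintype L] [Nonempty V] [Nonempty L]
    [DecidableEq V] [DecidableEq L]
    (w : L → L → V → V → ℝ) (hw : ∀ ℓ ℓ' u x, 0 ≤ w ℓ ℓ' u x)
    (p q r : ℝ) (hp : 0 < p) (hq : 0 < q) (hr : 0 < r)
    (d : V → V → ℕ)
    (Atil : V → V → ℝ)
    (hAtil : ∀ u x, Atil u x =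
      r⁻¹ * (∑ ℓ, ∑ ℓ', if ℓ ≠ ℓ' then w ℓ ℓ' u x else 0) + ∑ ℓ, w ℓ ℓ u x)
    (β : V → V → ℝ)
    (hβ : ∀ t x, β t x = p⁻¹ * (if d t x = 0 then 1 else 0)
        + (if d t x = 1 then 1 else 0) + q⁻¹ * (if d t x = 2 then 1 else 0))
    (γ : V → V → ℝ)
    (hγ : ∀ v x, γ v x = r⁻¹ * (if x = v then 1 else 0))
    (α : V → V → V → L → L → ℝ)
    (hα : ∀ t v x ℓ ℓ', α t v x ℓ ℓ' =
      β t x * (if ℓ' = ℓ then 1 else 0) + γ v x * (if ℓ' ≠ ℓ then 1 else 0))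
    (πstar : V → V → V → ℝ)
    (hπstar : ∀ t v x, πstar t v x = ∑ ℓ, ∑ ℓ', α t v x ℓ ℓ' * w ℓ ℓ' v x)
    (t v : V)
    (hdiag : ∀ ℓ ℓ' x, ℓ ≠ ℓ' → x ≠ v → w ℓ ℓ' v x = 0)
    (hdtv : d t v = 1) :
    ∀ x : V, πstar t v x = β t x * Atil v x := by
  intro x
  have key : πstar t v x = β t x * (∑ ℓ, w ℓ ℓ v x)
      + γ v x * (∑ ℓ, ∑ ℓ', if ℓ ≠ ℓ' then w ℓ ℓ' v x else 0) := by
    rw [hπstar, Finset.mul_sum, Finset.mul_sum, ← Finset.sum_add_distrib]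
    refine Finset.sum_congr rfl fun ℓ _ => ?_
    have hinner : ∀ ℓ' : L, α t v x ℓ ℓ' * w ℓ ℓ' v x
        = (if ℓ' = ℓ then β t x * w ℓ ℓ' v x else 0)
          + (if ℓ ≠ ℓ' then γ v x * w ℓ ℓ' v x else 0) := by
      intro ℓ'
      rw [hα]
      by_cases h : ℓ' = ℓ <;> simp [h, Ne.symm, add_mul, ne_comm]
    simp only [hinner, Finset.sum_add_distrib, Finset.sum_ite_eq', Finset.mem_univ,
      if_true, Finset.mul_sum]
    congr 1
    refine Finset.sum_congr rfl fun ℓ' _ => ?_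
    by_cases h : ℓ ≠ ℓ' <;> simp [h]
  by_cases hx : x = v
  · subst hx
    have hβx : β t x = 1 := by rw [hβ, hdtv]; norm_num
    have hγx : γ x x = r⁻¹ := by rw [hγ]; simp
    rw [key, hAtil, hβx, hγx]; ring
  · have hγx : γ v x = 0 := by rw [hγ]; simp [hx]
    have hoff : (∑ ℓ, ∑ ℓ', if ℓ ≠ ℓ' then w ℓ ℓ' v x else 0) = 0 := by
      refine Finset.sum_eq_zero fun ℓ _ => Finset.sum_eq_zero fun ℓ' _ => ?_
      by_cases h : ℓ ≠ ℓ' <;> simp [h, hdiag ℓ ℓ' x, hx]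
    rw [key, hAtil, hγx, hoff]; ring
end

section
/- Suppose the inter-layer weights vanish off the node diagonal, i.e. w_{ℓ,ℓ'}(v,x) = 0 whenever ℓ ≠ ℓ' and x ≠ v, suppose d(t,v) = 1, and suppose Z := Σ_{y∈V} β_{pq}(t,y)·Ã_{v,y}(r) > 0. Then Σ_{y∈V} π*(t,v,y) = Z, and for every node x ∈ V, π*(t,v,x) / Σ_{y∈V} π*(t,v,y) = β_{pq}(t,x)·Ã_{v,x}(r) / Z; that is, the normalized one-step transition distribution over the next node of the multi-node2vec walk on the multilayer network equals the one-step transition distribution of the node2vec walk on the adjusted aggregate graph Ã(r). -/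
/-- The normalized one-step transition distribution of the multi-node2vec walk
equals that of the node2vec walk on the adjusted aggregate graph `Ã(r)`. -/
theorem stmt_1 {V L : Type*} [Fintype V] [Fintype L] [Nonempty V] [Nonempty L]
    [DecidableEq V] [DecidableEq L]
    (w : L → L → V → V → ℝ) (hw : ∀ ℓ ℓ' u x, 0 ≤ w ℓ ℓ' u x)
    (p q r : ℝ) (hp : 0 < p) (hq : 0 < q) (hr : 0 < r)
    (d : V → V → ℕ)
    (Atil : V → V → ℝ)
    (hAtil : ∀ u x, Atil u x =
      r⁻¹ * (∑ ℓ, ∑ ℓ', if ℓ ≠ ℓ' then w ℓ ℓ' u x else 0) + ∑ ℓ, w ℓ ℓ u x)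
    (β : V → V → ℝ)
    (hβ : ∀ t x, β t x = p⁻¹ * (if d t x = 0 then 1 else 0)
        + (if d t x = 1 then 1 else 0) + q⁻¹ * (if d t x = 2 then 1 else 0))
    (γ : V → V → ℝ)
    (hγ : ∀ v x, γ v x = r⁻¹ * (if x = v then 1 else 0))
    (α : V → V → V → L → L → ℝ)
    (hα : ∀ t v x ℓ ℓ', α t v x ℓ ℓ' =
      β t x * (if ℓ' = ℓ then 1 else 0) + γ v x * (if ℓ' ≠ ℓ then 1 else 0))
    (πstar : V → V → V → ℝ)
    (hπstar : ∀ t v x, πstar t v x = ∑ ℓ, ∑ ℓ', α t v x ℓ ℓ' * w ℓ ℓ' v x)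
    (t v : V)
    (hdiag : ∀ ℓ ℓ' x, ℓ ≠ ℓ' → x ≠ v → w ℓ ℓ' v x = 0)
    (hdtv : d t v = 1)
    (hZ : 0 < ∑ y, β t y * Atil v y) :
    (∑ y, πstar t v y) = (∑ y, β t y * Atil v y) ∧
    ∀ x : V, πstar t v x / (∑ y, πstar t v y)
      = β t x * Atil v x / (∑ y, β t y * Atil v y) := by
  have key : ∀ x, πstar t v x = β t x * Atil v x := by
    intro x
    rw [hπstar, hAtil]
    have split : (∑ ℓ, ∑ ℓ', α t v x ℓ ℓ' * w ℓ ℓ' v x)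
        = β t x * (∑ ℓ, w ℓ ℓ v x)
          + γ v x * (∑ ℓ, ∑ ℓ', if ℓ ≠ ℓ' then w ℓ ℓ' v x else 0) := by
      rw [Finset.mul_sum, Finset.mul_sum, ← Finset.sum_add_distrib]
      refine Finset.sum_congr rfl fun ℓ _ => ?_
      simp only [hα, add_mul, Finset.sum_add_distrib, ite_mul, one_mul, zero_mul,
        mul_ite, mul_zero, mul_one]
      congr 1
      · exact (Finset.sum_ite_eq' Finset.univ ℓ fun ℓ' => β t x * w ℓ ℓ' v x).trans
          (if_pos (Finset.mem_univ ℓ))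
      · rw [Finset.mul_sum]
        refine Finset.sum_congr rfl fun ℓ' _ => ?_
        rcases eq_or_ne ℓ' ℓ with h | h
        · subst h; simp
        · rw [if_pos h, if_pos h.symm]
    rw [split]
    by_cases hx : x = v
    · subst hx
      have hβv : β t x = 1 := by rw [hβ, hdtv]; norm_num
      rw [hγ, if_pos rfl, hβv]; ring
    · have hz : (∑ ℓ, ∑ ℓ', if ℓ ≠ ℓ' then w ℓ ℓ' v x else 0) = 0 := by
        refine Finset.sum_eq_zero fun ℓ _ => Finset.sum_eq_zero fun ℓ' _ => ?_
        split
        · exact hdiag _ _ _ ‹_› hx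
        · rfl
      rw [hz]; ring
  constructor
  · exact Finset.sum_congr rfl fun y _ => key y
  · intro x
    rw [key x, Finset.sum_congr rfl fun y _ => key y]
end

section
/- Suppose p = q = 1, the inter-layer weights vanish off the node diagonal, i.e. w_{ℓ,ℓ'}(v,x) = 0 whenever ℓ ≠ ℓ' and x ≠ v, d(t,v) = 1, and d(t,x) ≤ 2 for every node x with Ã_{v,x}(r) ≠ 0. Then for every node x ∈ V, the multilayer unnormalized transition weight satisfies π*(t,v,x) = Ã_{v,x}(r); that is, when p = q = 1 the multi-node2vec walk reduces to the simple (first-order) weighted random walk of DeepWalk on the adjusted aggregate graph Ã(r). -/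
/-- When `p = q = 1`, the multi-node2vec walk reduces to the simple weighted
random walk of DeepWalk on the adjusted aggregate graph `Ã(r)`. -/
theorem stmt_2 {V L : Type*} [Fintype V] [Fintype L] [Nonempty V] [Nonempty L]
    [DecidableEq V] [DecidableEq L]
    (w : L → L → V → V → ℝ) (hw : ∀ ℓ ℓ' u x, 0 ≤ w ℓ ℓ' u x)
    (p q r : ℝ) (hp : 0 < p) (hq : 0 < q) (hr : 0 < r)
    (d : V → V → ℕ)
    (Atil : V → V → ℝ)
    (hAtil : ∀ u x, Atil u x =
      r⁻¹ * (∑ ℓ, ∑ ℓ', if ℓ ≠ ℓ' then w ℓ ℓ' u x else 0) + ∑ ℓ, w ℓ ℓ u x)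
    (β : V → V → ℝ)
    (hβ : ∀ t x, β t x = p⁻¹ * (if d t x = 0 then 1 else 0)
        + (if d t x = 1 then 1 else 0) + q⁻¹ * (if d t x = 2 then 1 else 0))
    (γ : V → V → ℝ)
    (hγ : ∀ v x, γ v x = r⁻¹ * (if x = v then 1 else 0))
    (α : V → V → V → L → L → ℝ)
    (hα : ∀ t v x ℓ ℓ', α t v x ℓ ℓ' =
      β t x * (if ℓ' = ℓ then 1 else 0) + γ v x * (if ℓ' ≠ ℓ then 1 else 0))
    (πstar : V → V → V → ℝ)
    (hπstar : ∀ t v x, πstar t v x = ∑ ℓ, ∑ ℓ', α t v x ℓ ℓ' * w ℓ ℓ' v x)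
    (t v : V)
    (hdiag : ∀ ℓ ℓ' x, ℓ ≠ ℓ' → x ≠ v → w ℓ ℓ' v x = 0)
    (hdtv : d t v = 1)
    (hp1 : p = 1) (hq1 : q = 1)
    (hd2 : ∀ x : V, Atil v x ≠ 0 → d t x ≤ 2) :
    ∀ x : V, πstar t v x = Atil v x := by
  intro x
  by_cases h : Atil v x = 0
  · -- all weights vanish
    have hkey : ∀ ℓ ℓ' : L, w ℓ ℓ' v x = 0 := by
      have hA := (hAtil v x).symm.trans h
      have hS1 : (0:ℝ) ≤ ∑ ℓ, ∑ ℓ', if ℓ ≠ ℓ' then w ℓ ℓ' v x else 0 :=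
        Finset.sum_nonneg fun ℓ _ => Finset.sum_nonneg fun ℓ' _ => by
          split <;> [exact hw _ _ _ _; exact le_rfl]
      have hS2 : (0:ℝ) ≤ ∑ ℓ, w ℓ ℓ v x :=
        Finset.sum_nonneg fun ℓ _ => hw _ _ _ _
      have hrS1 : (0:ℝ) ≤ r⁻¹ * ∑ ℓ, ∑ ℓ', if ℓ ≠ ℓ' then w ℓ ℓ' v x else 0 :=
        mul_nonneg (by positivity) hS1
      have h1 : r⁻¹ * (∑ ℓ, ∑ ℓ', if ℓ ≠ ℓ' then w ℓ ℓ' v x else 0) = 0 := by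
        linarith
      have h2 : (∑ ℓ, w ℓ ℓ v x) = 0 := by linarith
      have h1' : (∑ ℓ, ∑ ℓ', if ℓ ≠ ℓ' then w ℓ ℓ' v x else 0) = 0 := by
        rcases mul_eq_zero.mp h1 with hc | hc
        · exact absurd hc (by positivity)
        · exact hc
      intro ℓ ℓ'
      by_cases hll : ℓ = ℓ'
      · subst hll
        have := (Finset.sum_eq_zero_iff_of_nonneg
          (fun ℓ _ => hw ℓ ℓ v x)).mp h2 ℓ (Finset.mem_univ ℓ)
        exact this
      · have hrow := (Finset.sum_eq_zero_iff_of_nonneg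
          (fun ℓ _ => Finset.sum_nonneg fun ℓ' _ => by
            split <;> [exact hw _ _ _ _; exact le_rfl])).mp h1' ℓ (Finset.mem_univ ℓ)
        have := (Finset.sum_eq_zero_iff_of_nonneg
          (fun ℓ'' _ => by split <;> [exact hw ℓ ℓ'' v x; exact le_rfl])).mp hrow
          ℓ' (Finset.mem_univ ℓ')
        simpa [hll] using this
    rw [hπstar, h]
    simp [hkey]
  · have hdx : d t x ≤ 2 := hd2 x h
    have hβ1 : β t x = 1 := by
      rw [hβ, hp1, hq1]
      interval_cases hdd : (d t x) <;> simp
    rw [hπstar, hAtil, Finset.mul_sum]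
    have hsum2 : (∑ ℓ : L, w ℓ ℓ v x) = ∑ ℓ : L, ∑ ℓ' : L,
        if ℓ' = ℓ then w ℓ ℓ' v x else 0 := by
      refine Finset.sum_congr rfl fun ℓ _ => ?_
      rw [Finset.sum_ite_eq' Finset.univ ℓ (fun ℓ' => w ℓ ℓ' v x)]
      simp
    rw [hsum2, ← Finset.sum_add_distrib]
    refine Finset.sum_congr rfl fun ℓ _ => ?_
    rw [Finset.mul_sum, ← Finset.sum_add_distrib]
    refine Finset.sum_congr rfl fun ℓ' _ => ?_
    rw [hα, hγ, hβ1]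
    by_cases hll : ℓ' = ℓ
    · subst hll
      simp
    · by_cases hxv : x = v
      · subst hxv
        simp [hll, Ne.symm hll]
      · have := hdiag ℓ ℓ' x (Ne.symm hll) hxv
        simp [hll, Ne.symm hll, this, hxv]
end

section
/- Suppose in addition that the graph on V whose edges are the pairs {u,v} with A_{u,v} > 0 is connected and non-bipartite (it contains a closed walk of odd length along positive-weight edges). Then for all nodes u, v ∈ V, the j-step transition probabilities converge to the stationary probabilities: (P^l)_{u,v} → d_v/vol as l → ∞. -/
open Finset

section Aux

variable {V : Type*} [Fintype V] [Nonempty V] [DecidableEq V]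

/-- Existence of a walk of length `n` from `u` to `v` along positive entries of `A`. -/
def hasWalk (A : Matrix V V ℝ) (u v : V) (n : ℕ) : Prop :=
  ∃ f : ℕ → V, f 0 = u ∧ f n = v ∧ ∀ i < n, 0 < A (f i) (f (i + 1))

lemma hasWalk_trans {A : Matrix V V ℝ} {u v w : V} {m n : ℕ}
    (h1 : hasWalk A u v m) (h2 : hasWalk A v w n) : hasWalk A u w (m + n) := by
  obtain ⟨f, hf0, hfm, hf⟩ := h1
  obtain ⟨g, hg0, hgn, hg⟩ := h2
  refine ⟨fun i => if i < m then f i else g (i - m), ?_, ?_, ?_⟩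
  · by_cases hm : 0 < m
    · simp [hm, hf0]
    · have : m = 0 := by omega
      subst this
      simpa [hg0] using hfm.symm.trans hf0
  · have : ¬ (m + n < m) := by omega
    simp [this, hgn]
  · intro i hi
    by_cases h : i < m
    · by_cases h' : i + 1 < m
      · simpa [h, h'] using hf i h
      · have he : i + 1 = m := by omega
        have : g (i + 1 - m) = f (i + 1) := by
          rw [show i + 1 - m = 0 by omega, hg0, he, hfm]
        simp only [if_pos h, if_neg (by omega : ¬ i + 1 < m), this]
        exact hf i h
    · have h' : ¬ i + 1 < m := by omega
      simp only [if_neg h, if_neg h']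
      have : i + 1 - m = (i - m) + 1 := by omega
      rw [this]
      exact hg (i - m) (by omega)

lemma hasWalk_two {A : Matrix V V ℝ} (hsymm : ∀ u v, A u v = A v u)
    (hnb : ∀ u : V, ∃ w, 0 < A u w) (u : V) : hasWalk A u u 2 := by
  obtain ⟨w, hw⟩ := hnb u
  refine ⟨fun i => if i = 1 then w else u, by simp, by simp, ?_⟩
  intro i hi
  interval_cases i
  · simpa using hw
  · simpa using (hsymm u w ▸ hw)

lemma hasWalk_pad {A : Matrix V V ℝ} (hsymm : ∀ u v, A u v = A v u)
    (hnb : ∀ u : V, ∃ w, 0 < A u w) {u v : V} {n : ℕ}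
    (h : hasWalk A u v n) (k : ℕ) : hasWalk A u v (n + 2 * k) := by
  induction k with
  | zero => simpa using h
  | succ k ih =>
      have := hasWalk_trans (hasWalk_two hsymm hnb u) ih
      rwa [show 2 + (n + 2 * k) = n + 2 * (k + 1) by ring] at this

lemma walk_all_large {A : Matrix V V ℝ} (hsymm : ∀ u v, A u v = A v u)
    (hnb : ∀ u : V, ∃ w, 0 < A u w)
    (hconn : ∀ u v : V, ∃ n, hasWalk A u v n)
    (hodd : ∃ (u0 : V) (c : ℕ), Odd c ∧ hasWalk A u0 u0 c)
    (u v : V) : ∃ L, ∀ n ≥ L, hasWalk A u v n := by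
  obtain ⟨u0, c, hc, wcyc⟩ := hodd
  obtain ⟨a, wa⟩ := hconn u u0
  obtain ⟨b, wb⟩ := hconn u0 v
  have w1 : hasWalk A u v (a + b) := hasWalk_trans wa wb
  have w2 : hasWalk A u v (a + (c + b)) := hasWalk_trans wa (hasWalk_trans wcyc wb)
  refine ⟨a + b + c, fun n hn => ?_⟩
  rcases Nat.even_or_odd (n - (a + b)) with he | ho
  · obtain ⟨k, hk⟩ := he
    have : n = (a + b) + 2 * k := by omega
    rw [this]; exact hasWalk_pad hsymm hnb w1 k
  · obtain ⟨m, hm⟩ := ho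
    obtain ⟨j, hj⟩ := hc
    have : n = (a + (c + b)) + 2 * (m - j) := by omega
    rw [this]; exact hasWalk_pad hsymm hnb w2 (m - j)

lemma pow_entry_nonneg {P : Matrix V V ℝ} (h : ∀ a b, 0 ≤ P a b) (n : ℕ) :
    ∀ a b, 0 ≤ (P ^ n) a b := by
  induction n with
  | zero => intro a b; by_cases hab : a = b <;> simp [Matrix.one_apply, hab]
  | succ n ih =>
      intro a b
      rw [pow_succ, Matrix.mul_apply]
      exact Finset.sum_nonneg fun w _ => mul_nonneg (ih a w) (h w b)

lemma pow_row_sum {P : Matrix V V ℝ} (h : ∀ a, ∑ b, P a b = 1) (n : ℕ) :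
    ∀ a, ∑ b, (P ^ n) a b = 1 := by
  induction n with
  | zero => intro a; simp [Matrix.one_apply]
  | succ n ih =>
      intro a
      simp only [pow_succ, Matrix.mul_apply]
      rw [Finset.sum_comm]
      simp [← Finset.mul_sum, h, ih a]

lemma pow_pos_of_walk {A P : Matrix V V ℝ} (hPnn : ∀ a b, 0 ≤ P a b)
    (hPA : ∀ a b, 0 < A a b → 0 < P a b) :
    ∀ n u v, hasWalk A u v n → 0 < (P ^ n) u v := by
  intro n
  induction n with
  | zero =>
      rintro u v ⟨f, h0, h1, -⟩
      have : u = v := h0 ▸ h1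
      simp [Matrix.one_apply, this]
  | succ n ih =>
      rintro u v ⟨f, h0, h1, hf⟩
      have hPw : 0 < P u (f 1) := hPA _ _ (h0 ▸ hf 0 (Nat.succ_pos n))
      have tail : hasWalk A (f 1) v n :=
        ⟨fun i => f (i + 1), rfl, h1, fun i hi => hf (i + 1) (by omega)⟩
      rw [pow_succ', Matrix.mul_apply]
      exact Finset.sum_pos'
        (fun w _ => mul_nonneg (hPnn _ _) (pow_entry_nonneg hPnn n _ _))
        ⟨f 1, Finset.mem_univ _, mul_pos hPw (ih _ _ tail)⟩

lemma stationary_pow {P : Matrix V V ℝ} {p : V → ℝ}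
    (hstep : ∀ b, ∑ a, p a * P a b = p b) (n : ℕ) :
    ∀ b, ∑ a, p a * (P ^ n) a b = p b := by
  induction n with
  | zero => intro b; simp [Matrix.one_apply]
  | succ n ih =>
      intro b
      simp only [pow_succ, Matrix.mul_apply, Finset.mul_sum]
      rw [Finset.sum_comm]
      have : ∀ w, ∑ a, p a * ((P ^ n) a w * P w b) = p w * P w b := by
        intro w
        simp only [← mul_assoc, ← Finset.sum_mul, ih w]
      simp only [this]
      exact hstep b

lemma doeblin {Q : Matrix V V ℝ} {δ : ℝ} (hδ : 0 ≤ δ) (hge : ∀ a b, δ ≤ Q a b)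
    (hrow : ∀ a, ∑ b, Q a b = 1) (x y : V → ℝ)
    (hy : ∀ a, y a = ∑ b, Q a b * x b) :
    Finset.univ.sup' Finset.univ_nonempty y - Finset.univ.inf' Finset.univ_nonempty y ≤
      (1 - δ * Fintype.card V) *
        (Finset.univ.sup' Finset.univ_nonempty x - Finset.univ.inf' Finset.univ_nonempty x) := by
  set M := Finset.univ.sup' Finset.univ_nonempty x with hM
  set m := Finset.univ.inf' Finset.univ_nonempty x with hm
  obtain ⟨u1, -, hu1⟩ := Finset.exists_mem_eq_sup' Finset.univ_nonempty y
  obtain ⟨u2, -, hu2⟩ := Finset.exists_mem_eq_inf' Finset.univ_nonempty y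
  rw [hu1, hu2]
  have key : ∀ a, y a - δ * ∑ b, x b = ∑ b, (Q a b - δ) * x b := by
    intro a
    rw [hy, Finset.mul_sum, ← Finset.sum_sub_distrib]
    exact Finset.sum_congr rfl fun b _ => by ring
  have hsum : ∀ a, ∑ b, (Q a b - δ) = 1 - δ * Fintype.card V := by
    intro a
    rw [Finset.sum_sub_distrib, hrow, Finset.sum_const, Finset.card_univ,
      nsmul_eq_mul]
    ring
  have hub : y u1 - δ * ∑ b, x b ≤ (1 - δ * Fintype.card V) * M := by
    rw [key]
    calc ∑ b, (Q u1 b - δ) * x b ≤ ∑ b, (Q u1 b - δ) * M :=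
          Finset.sum_le_sum fun b _ => mul_le_mul_of_nonneg_left
            (Finset.le_sup' x (Finset.mem_univ b)) (by linarith [hge u1 b])
      _ = (1 - δ * Fintype.card V) * M := by rw [← Finset.sum_mul, hsum]
  have hlb : (1 - δ * Fintype.card V) * m ≤ y u2 - δ * ∑ b, x b := by
    rw [key]
    calc (1 - δ * Fintype.card V) * m = ∑ b, (Q u2 b - δ) * m := by
          rw [← Finset.sum_mul, hsum]
      _ ≤ ∑ b, (Q u2 b - δ) * x b :=
          Finset.sum_le_sum fun b _ => mul_le_mul_of_nonneg_left
            (Finset.inf'_le x (Finset.mem_univ b)) (by linarith [hge u2 b])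
  linarith

end Aux

/-- If the positive-weight graph is connected and non-bipartite, the `l`-step
transition probabilities of the random walk converge to the stationary
probabilities `d_v / vol`. -/
theorem stmt_6 {V : Type*} [Fintype V] [Nonempty V] [DecidableEq V]
    (A : Matrix V V ℝ) (hsymm : ∀ u v, A u v = A v u) (hnn : ∀ u v, 0 ≤ A u v)
    (d : V → ℝ) (hd : ∀ u, d u = ∑ v, A u v) (hdpos : ∀ u, 0 < d u)
    (vol : ℝ) (hvol : vol = ∑ u, d u)
    (P : Matrix V V ℝ) (hP : ∀ u v, P u v = A u v / d u)
    (pdist : V → ℝ) (hpdist : ∀ u, pdist u = d u / vol)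
    (hconn : ∀ u v : V, ∃ (n : ℕ) (f : ℕ → V), f 0 = u ∧ f n = v ∧
      ∀ i < n, 0 < A (f i) (f (i + 1)))
    (hodd : ∃ (u : V) (n : ℕ) (f : ℕ → V), Odd n ∧ f 0 = u ∧ f n = u ∧
      ∀ i < n, 0 < A (f i) (f (i + 1))) :
    ∀ u v : V,
      Filter.Tendsto (fun l : ℕ => (P ^ l) u v) Filter.atTop (nhds (d v / vol)) := by
  intro u v
  -- basic positivity facts
  have hdne : ∀ a, d a ≠ 0 := fun a => (hdpos a).ne'
  have hvolpos : 0 < vol := by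
    rw [hvol]; exact Finset.sum_pos (fun a _ => hdpos a) Finset.univ_nonempty
  have hPnn : ∀ a b, 0 ≤ P a b := fun a b => by
    rw [hP]; exact div_nonneg (hnn a b) (hdpos a).le
  have hProw : ∀ a, ∑ b, P a b = 1 := by
    intro a
    simp only [hP]
    rw [← Finset.sum_div, ← hd a, div_self (hdne a)]
  have hPA : ∀ a b, 0 < A a b → 0 < P a b := fun a b h => by
    rw [hP]; exact div_pos h (hdpos a)
  have hnb : ∀ a : V, ∃ w, 0 < A a w := by
    intro a
    have : (0 : ℝ) < ∑ w, A a w := by rw [← hd]; exact hdpos a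
    by_contra hcon
    push_neg at hcon
    have : (∑ w, A a w) ≤ 0 := Finset.sum_nonpos fun w _ => hcon w
    linarith
  -- primitivity: a power with all entries positive
  have hconn' : ∀ a b : V, ∃ n, hasWalk A a b n := by
    intro a b; obtain ⟨n, f, h1, h2, h3⟩ := hconn a b; exact ⟨n, f, h1, h2, h3⟩
  have hodd' : ∃ (u0 : V) (c : ℕ), Odd c ∧ hasWalk A u0 u0 c := by
    obtain ⟨u0, c, f, hc, h1, h2, h3⟩ := hodd; exact ⟨u0, c, hc, f, h1, h2, h3⟩
  have hL : ∀ a b : V, ∃ L, ∀ n ≥ L, hasWalk A a b n :=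
    walk_all_large hsymm hnb hconn' hodd'
  choose L hLw using hL
  set N : ℕ := 1 + ∑ p : V × V, L p.1 p.2 with hNdef
  have hN1 : 0 < N := by omega
  have hNwalk : ∀ a b, hasWalk A a b N := by
    intro a b
    refine hLw a b N ?_
    have : L a b ≤ ∑ p : V × V, L p.1 p.2 :=
      Finset.single_le_sum (f := fun p : V × V => L p.1 p.2)
        (fun p _ => Nat.zero_le _) (Finset.mem_univ (a, b))
    omega
  have hQpos : ∀ a b, 0 < (P ^ N) a b := fun a b =>
    pow_pos_of_walk hPnn hPA N a b (hNwalk a b)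
  have hQrow : ∀ a, ∑ b, (P ^ N) a b = 1 := pow_row_sum hProw N
  -- the Doeblin constant
  set δ : ℝ := Finset.univ.inf' Finset.univ_nonempty
      (fun p : V × V => (P ^ N) p.1 p.2) with hδdef
  have hδpos : 0 < δ := by
    rw [hδdef, Finset.lt_inf'_iff]
    exact fun p _ => hQpos p.1 p.2
  have hδle : ∀ a b, δ ≤ (P ^ N) a b := fun a b =>
    Finset.inf'_le _ (Finset.mem_univ (a, b))
  set θ : ℝ := 1 - δ * Fintype.card V with hθdef
  have hθlt : θ < 1 := by
    have : (0 : ℝ) < Fintype.card V := by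
      exact_mod_cast Fintype.card_pos
    have := mul_pos hδpos this
    rw [hθdef]; linarith
  have hθnn : 0 ≤ θ := by
    have a0 : V := Classical.arbitrary V
    have h1 : δ * Fintype.card V ≤ 1 := by
      have : ∑ b : V, δ ≤ ∑ b, (P ^ N) a0 b :=
        Finset.sum_le_sum fun b _ => hδle a0 b
      rw [hQrow a0, Finset.sum_const, Finset.card_univ, nsmul_eq_mul] at this
      linarith [this]
    rw [hθdef]; linarith
  -- oscillation of the column v of P^l
  set g : ℕ → V → ℝ := fun l a => (P ^ l) a v with hgdef
  set osc : ℕ → ℝ := fun l =>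
    Finset.univ.sup' Finset.univ_nonempty (g l) -
      Finset.univ.inf' Finset.univ_nonempty (g l) with hoscdef
  have hg1 : ∀ l a, g (l + 1) a = ∑ w, P a w * g l w := by
    intro l a
    simp only [hgdef, pow_succ', Matrix.mul_apply]
  have hgN : ∀ l a, g (l + N) a = ∑ w, (P ^ N) a w * g l w := by
    intro l a
    simp only [hgdef]
    rw [add_comm, pow_add, Matrix.mul_apply]
  have hosc_nonneg : ∀ l, 0 ≤ osc l := by
    intro l
    have h1 := Finset.le_sup' (g l) (Finset.mem_univ (Classical.arbitrary V))
    have h2 := Finset.inf'_le (g l) (Finset.mem_univ (Classical.arbitrary V))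
    simp only [hoscdef]
    linarith
  have hosc_succ : ∀ l, osc (l + 1) ≤ osc l := by
    intro l
    have h := doeblin (δ := 0) le_rfl (fun a b => hPnn a b) hProw (g l) (g (l + 1)) (hg1 l)
    rw [zero_mul, sub_zero, one_mul] at h
    exact h
  have hosc_anti : Antitone osc := antitone_nat_of_succ_le hosc_succ
  have hosc_N : ∀ l, osc (l + N) ≤ θ * osc l := fun l =>
    doeblin hδpos.le hδle hQrow (g l) (g (l + N)) (hgN l)
  have hosc_k : ∀ k, osc (k * N) ≤ θ ^ k * osc 0 := by
    intro k
    induction k with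
    | zero => simp
    | succ k ih =>
        have h1 : osc ((k + 1) * N) ≤ θ * osc (k * N) := by
          have := hosc_N (k * N)
          rwa [show k * N + N = (k + 1) * N by ring] at this
        calc osc ((k + 1) * N) ≤ θ * osc (k * N) := h1
          _ ≤ θ * (θ ^ k * osc 0) := mul_le_mul_of_nonneg_left ih hθnn
          _ = θ ^ (k + 1) * osc 0 := by ring
  have hosc_le : ∀ l, osc l ≤ θ ^ (l / N) * osc 0 := by
    intro l
    calc osc l ≤ osc (l / N * N) := hosc_anti (Nat.div_mul_le_self l N)
      _ ≤ θ ^ (l / N) * osc 0 := hosc_k (l / N)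
  have hdiv : Filter.Tendsto (fun l : ℕ => l / N) Filter.atTop Filter.atTop :=
    Filter.tendsto_atTop_atTop.mpr fun b =>
      ⟨b * N, fun a ha => (Nat.le_div_iff_mul_le hN1).mpr ha⟩
  have hosc_to0 : Filter.Tendsto osc Filter.atTop (nhds 0) := by
    have h1 : Filter.Tendsto (fun l : ℕ => θ ^ (l / N) * osc 0) Filter.atTop (nhds 0) := by
      have := ((tendsto_pow_atTop_nhds_zero_of_lt_one hθnn hθlt).comp hdiv).mul_const (osc 0)
      simpa using this
    exact squeeze_zero hosc_nonneg hosc_le h1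
  -- stationarity
  have hstep : ∀ b, ∑ a, pdist a * P a b = pdist b := by
    intro b
    have h1 : ∀ a, pdist a * P a b = A a b / vol := by
      intro a
      rw [hpdist, hP, div_mul_div_comm, mul_comm (d a) (A a b),
        mul_div_mul_right _ _ (hdne a)]
    rw [Finset.sum_congr rfl fun a _ => h1 a, ← Finset.sum_div]
    have h2 : ∑ a, A a b = d b := by
      rw [hd]
      exact Finset.sum_congr rfl fun a _ => hsymm a b
    rw [h2, hpdist]
  have hstat : ∀ l, ∑ a, pdist a * g l a = pdist v := fun l =>
    stationary_pow hstep l v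
  have hpd_nn : ∀ a, 0 ≤ pdist a := fun a => by
    rw [hpdist]; exact div_nonneg (hdpos a).le hvolpos.le
  have hpd_sum : ∑ a : V, pdist a = 1 := by
    simp only [hpdist]
    rw [← Finset.sum_div, ← hvol, div_self hvolpos.ne']
  -- pdist v lies between the column min and max
  have hbound : ∀ l, |g l u - pdist v| ≤ osc l := by
    intro l
    have hub : pdist v ≤ Finset.univ.sup' Finset.univ_nonempty (g l) := by
      rw [← hstat l]
      calc ∑ a, pdist a * g l a
          ≤ ∑ a, pdist a * Finset.univ.sup' Finset.univ_nonempty (g l) :=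
            Finset.sum_le_sum fun a _ => mul_le_mul_of_nonneg_left
              (Finset.le_sup' (g l) (Finset.mem_univ a)) (hpd_nn a)
        _ = Finset.univ.sup' Finset.univ_nonempty (g l) := by
            rw [← Finset.sum_mul, hpd_sum, one_mul]
    have hlb : Finset.univ.inf' Finset.univ_nonempty (g l) ≤ pdist v := by
      rw [← hstat l]
      calc Finset.univ.inf' Finset.univ_nonempty (g l)
          = ∑ a, pdist a * Finset.univ.inf' Finset.univ_nonempty (g l) := by
            rw [← Finset.sum_mul, hpd_sum, one_mul]
        _ ≤ ∑ a, pdist a * g l a :=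
            Finset.sum_le_sum fun a _ => mul_le_mul_of_nonneg_left
              (Finset.inf'_le (g l) (Finset.mem_univ a)) (hpd_nn a)
    have hgu1 : g l u ≤ Finset.univ.sup' Finset.univ_nonempty (g l) :=
      Finset.le_sup' (g l) (Finset.mem_univ u)
    have hgu2 : Finset.univ.inf' Finset.univ_nonempty (g l) ≤ g l u :=
      Finset.inf'_le (g l) (Finset.mem_univ u)
    rw [abs_le]
    constructor <;> simp only [hoscdef] <;> linarith
  have hmain : Filter.Tendsto (fun l => g l u - pdist v) Filter.atTop (nhds 0) :=
    squeeze_zero_norm hbound hosc_to0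
  have : Filter.Tendsto (fun l => g l u) Filter.atTop (nhds (pdist v)) := by
    have := hmain.add_const (pdist v)
    simpa using this
  simpa [hgdef, hpdist] using this
end
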